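/- For n = 3, let L_{LF}[X] = Σ_{i,j=0}^{2} γ_{ij}(σ_{ij}Xσ_{ij} − ½{σ_{ij}²,X}) be the GKSL generator with Gell-Mann noise operators. Then L_{LF}[σ_{22}] = −½[√3(γ̃_{02}−γ̃_{12})σ_{11} + 3(γ̃_{02}+γ̃_{12})σ_{22}], where γ̃_{kl} := γ_{kl}+γ_{lk}; consequently σ_{22} is an eigenvector of L_{LF} if and only if γ_{02}+γ_{20} = γ_{12}+γ_{21}. -/

import Mathlib

/-!
A noise term `D_A(X) = A X A - ½ {A², X}` vanishes as soon as `A` commutes with `X`. Since `σ₂₂`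
is diagonal, only the off-diagonal Gell-Mann matrices contribute, and for `a ≠ b` both `σ_{ab}`
and `σ_{ba}` send `diag d` to `(d_b - d_a) (e_{aa} - e_{bb})`. The pair `{0, 1}`, on which `σ₂₂`
has equal entries, drops out, and
`e₀₀ - e₂₂ = ½ σ₁₁ + (√3/2) σ₂₂`, `e₁₁ - e₂₂ = -½ σ₁₁ + (√3/2) σ₂₂` give the formula.
As `σ₁₁` and `σ₂₂` are linearly independent, `σ₂₂` is an eigenvector iff the `σ₁₁`-coefficient
vanishes.
-/

open Matrix BigOperators

/-- The generalized Gell-Mann matrices on `ℂ^n`: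
`gm n a b` is `σ_{ab}` (symmetric for `a < b`, antisymmetric for `a > b`,
diagonal for `a = b > 0`, identity for `a = b = 0`). -/
noncomputable def gm (n : ℕ) (a b : Fin n) : Matrix (Fin n) (Fin n) ℂ :=
  if a < b then Matrix.single a b 1 + Matrix.single b a 1
  else if b < a then (-Complex.I) • (Matrix.single b a 1 - Matrix.single a b 1)
  else if (a : ℕ) = 0 then 1
  else (Real.sqrt (2 / ((a : ℕ) * ((a : ℕ) + 1))) : ℂ) •
    ((∑ i : Fin n, if (i : ℕ) < (a : ℕ) then Matrix.single i i 1 else 0)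
      - ((a : ℕ) : ℂ) • Matrix.single a a 1)

section Dissipator

variable {R : Type*} [Ring R] [Algebra ℂ R]

noncomputable def dissipator (A X : R) : R :=
  A * X * A - (1 / 2 : ℂ) • (A * A * X + X * (A * A))

lemma dissipator_eq_zero_of_commute {A X : R} (h : Commute A X) : dissipator A X = 0 := by
  have hAAX : A * A * X = X * (A * A) := (h.mul_left h).eq
  rw [dissipator, mul_assoc, ← h.eq, ← mul_assoc, hAAX, ← two_smul ℂ, smul_smul]
  norm_num

end Dissipator

section SingleDiagonal

variable {ι α : Type*} [Fintype ι] [DecidableEq ι] [NonUnitalNonAssocSemiring α]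

lemma single_mul_diagonal (i j : ι) (c : α) (d : ι → α) :
    single i j c * diagonal d = single i j (c * d j) := by
  ext k l
  rw [mul_diagonal, single_apply, single_apply]
  split_ifs with h
  · rw [h.2]
  · rw [zero_mul]

lemma diagonal_mul_single (i j : ι) (c : α) (d : ι → α) :
    diagonal d * single i j c = single i j (d i * c) := by
  ext k l
  rw [diagonal_mul, single_apply, single_apply]
  split_ifs with h
  · rw [h.1]
  · rw [mul_zero]

end SingleDiagonal

lemma dissipator_single_add_single_diagonal {ι : Type*} [Fintype ι] [DecidableEq ι] {a b : ι}
    (hab : a ≠ b) (u v : ℂ) (d : ι → ℂ) :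
    dissipator (single a b u + single b a v) (diagonal d) =
      (u * v * (d b - d a)) • (single a a 1 - single b b 1) := by
  simp only [dissipator, add_mul, mul_add, single_mul_diagonal, diagonal_mul_single,
    single_mul_single_same, single_mul_single_of_ne _ _ _ _ hab,
    single_mul_single_of_ne _ _ _ _ hab.symm, add_zero, zero_add]
  ext k l
  simp only [Matrix.sub_apply, Matrix.add_apply, Matrix.smul_apply, single_apply, smul_eq_mul]
  split_ifs <;> ring

section GellMann

variable {n : ℕ}

lemma gm_of_lt {a b : Fin n} (h : a < b) : gm n a b = single a b 1 + single b a 1 := by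
  simp [gm, h]

lemma gm_of_gt {a b : Fin n} (h : b < a) :
    gm n a b = single a b Complex.I + single b a (-Complex.I) := by
  rw [gm, if_neg (not_lt_of_gt h), if_pos h, smul_sub, smul_single, smul_single, sub_eq_add_neg,
    single_neg, add_comm]
  simp

lemma isDiag_gm_self (a : Fin n) : (gm n a a).IsDiag := by
  intro i j hij
  have hsingle (k : Fin n) (c : ℂ) : single k k c i j = 0 :=
    single_apply_of_ne k k c i j fun hk => hij (hk.1.symm.trans hk.2)
  have hsum : (∑ k : Fin n, if k < a then single k k (1 : ℂ) else 0) i j = 0 := by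
    rw [Matrix.sum_apply]
    exact Finset.sum_eq_zero fun k _ => by split_ifs <;> simp [hsingle]
  rw [gm, if_neg (lt_irrefl a), if_neg (lt_irrefl a)]
  split_ifs
  · exact one_apply_ne hij
  · simp [hsum, hsingle]

lemma dissipator_gm_self_diagonal (a : Fin n) (d : Fin n → ℂ) :
    dissipator (gm n a a) (diagonal d) = 0 := by
  apply dissipator_eq_zero_of_commute
  rw [← (isDiag_gm_self a).diagonal_diag]
  exact commute_diagonal _ _

lemma dissipator_gm_diagonal_of_ne {a b : Fin n} (hab : a ≠ b) (d : Fin n → ℂ) :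
    dissipator (gm n a b) (diagonal d) = (d b - d a) • (single a a 1 - single b b 1) := by
  rcases hab.lt_or_gt with h | h
  · rw [gm_of_lt h, dissipator_single_add_single_diagonal hab, one_mul, one_mul]
  · rw [gm_of_gt h, dissipator_single_add_single_diagonal hab, mul_neg, Complex.I_mul_I, neg_neg,
      one_mul]

end GellMann

lemma gm_three_one_one : gm 3 1 1 = diagonal ![1, -1, 0] := by
  ext i j
  fin_cases i <;> fin_cases j <;> simp [gm, one_add_one_eq_two]

lemma gm_three_two_two :
    gm 3 2 2 = diagonal ![(√3 : ℂ)⁻¹, (√3 : ℂ)⁻¹, -2 * (√3 : ℂ)⁻¹] := by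
  ext i j
  fin_cases i <;> fin_cases j <;> simp [gm, Fin.sum_univ_three] <;> norm_num <;> field_simp

theorem LinearIndependent.exists_smul_add_smul_eq_smul_iff {K M : Type*} [Ring K]
    [AddCommGroup M] [Module K M] {x y : M} (hxy : LinearIndependent K ![x, y]) (a b : K) :
    (∃ c : K, a • x + b • y = c • y) ↔ a = 0 := by
  constructor
  · rintro ⟨c, h⟩
    exact (LinearIndependent.pair_iff.1 hxy a (b - c) (by rw [sub_smul, ← h]; abel)).1
  · rintro rfl
    exact ⟨b, zero_smul K x ▸ zero_add _⟩

lemma linearIndependent_gm_three_one_one_two_two :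
    LinearIndependent ℂ ![gm 3 1 1, gm 3 2 2] := by
  rw [LinearIndependent.pair_iff, gm_three_one_one, gm_three_two_two]
  intro s t h
  have h0 := congr_fun (congr_fun h 0) 0
  have h1 := congr_fun (congr_fun h 1) 1
  simp only [Matrix.add_apply, Matrix.smul_apply, Matrix.zero_apply, diagonal_apply_eq,
    cons_val_zero, cons_val_one, smul_eq_mul, mul_one, mul_neg] at h0 h1
  have hs : s = 0 := by linear_combination (h0 - h1) / 2
  refine ⟨hs, ?_⟩
  simpa [hs] using h0

theorem LF_gellMann_three_sigma22 (γ : Fin 3 → Fin 3 → ℝ) :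
    let L : Matrix (Fin 3) (Fin 3) ℂ → Matrix (Fin 3) (Fin 3) ℂ := fun X =>
      ∑ i, ∑ j, (γ i j : ℂ) •
        (gm 3 i j * X * gm 3 i j
          - (1 / 2 : ℂ) • (gm 3 i j * gm 3 i j * X + X * (gm 3 i j * gm 3 i j)))
    L (gm 3 2 2) = (-(1 / 2) : ℂ) •
        (((Real.sqrt 3 * ((γ 0 2 + γ 2 0) - (γ 1 2 + γ 2 1)) : ℝ) : ℂ) • gm 3 1 1 +
          ((3 * ((γ 0 2 + γ 2 0) + (γ 1 2 + γ 2 1)) : ℝ) : ℂ) • gm 3 2 2) ∧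
      ((∃ c : ℂ, L (gm 3 2 2) = c • gm 3 2 2) ↔ γ 0 2 + γ 2 0 = γ 1 2 + γ 2 1) := by
  intro L
  have hL : L (gm 3 2 2) = (-(1 / 2) : ℂ) •
        (((Real.sqrt 3 * ((γ 0 2 + γ 2 0) - (γ 1 2 + γ 2 1)) : ℝ) : ℂ) • gm 3 1 1 +
          ((3 * ((γ 0 2 + γ 2 0) + (γ 1 2 + γ 2 1)) : ℝ) : ℂ) • gm 3 2 2) := by
    show ∑ i, ∑ j, (γ i j : ℂ) • dissipator (gm 3 i j) (gm 3 2 2) = _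
    rw [gm_three_one_one, gm_three_two_two]
    simp only [Fin.sum_univ_three, dissipator_gm_self_diagonal, ne_eq,
      dissipator_gm_diagonal_of_ne, Fin.reduceEq, not_false_eq_true]
    have h3 : (√3 : ℂ) ^ 2 = 3 := by norm_cast; simp
    ext i j
    fin_cases i <;> fin_cases j <;> simp <;> field_simp <;> grind
  refine ⟨hL, ?_⟩
  rw [hL, smul_add, smul_smul, smul_smul,
    linearIndependent_gm_three_one_one_two_two.exists_smul_add_smul_eq_smul_iff]
  have h3 : √3 ≠ 0 := by positivity
  rw [mul_eq_zero, Complex.ofReal_eq_zero, mul_eq_zero, sub_eq_zero]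
  norm_num [h3]
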